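/- arXiv:2503.14038 — 4 statements merged into one kernel-verified Lean document; each statement's English description precedes it below -/
import Mathlib

section
/- For every c ∈ (0, 2/π) there exist γ₀ > 0 and C > 0 such that for every τ > 0, every x ∈ ℝ^d with 1 ≤ |x|_Γ ≤ 4, and every ξ ∈ ℝ^d for which there exists ζ ∈ ℝ^d with ‖Eζ‖₂ = ‖∇_Eφ_τ(x)‖₂, ⟨Eζ, ∇_Eφ_τ(x)⟩ = 0 and ‖Eξ − Eζ‖₂ ≤ γ₀τ, one has ∇_Eφ_τ(x)ᵀ · ∇²_Eφ_τ(x) · ∇_Eφ_τ(x) + (Eξ)ᵀ · ∇²_Eφ_τ(x) · (Eξ) ≥ Cτ³. -/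
/-!
The weight is radial for `|·|_Γ`: with `A = (EᵀE)⁻¹`, `ρ = |x|_Γ` and `r = E A x`, one has
`∇φ_τ(x) = s A x` and, on vectors of the form `Eξ`, the conjugated Hessian is the quadratic form
`p ↦ s |p|² + t (r · p)²`, where `s = τφ'(ρ)/ρ ≤ 0` and `t = τ(φ''(ρ)ρ - φ'(ρ))/ρ³ ≥ 0`.
The first term equals `s³ρ² + t s²ρ⁴`. In the second, drop the `t`-part and replace `Eξ` by `Eζ`,
whose length is that of the gradient, `|s| ρ`; this costs `O(γ₀ τ³)` and leaves `s³ρ²`. The sum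
`2 s³ρ² + t s²ρ⁴ = τ³ φ'(ρ)² (φ''(ρ) + φ'(ρ)/ρ) = τ³ φ'(ρ)² c / ((1 + log² ρ) ρ²)` is bounded below
by a multiple of `τ³` on `1 ≤ ρ ≤ 4`, because `c < 2/π` keeps `φ'(ρ) = (c arctan (log ρ) - 1)/ρ`
away from `0`.
-/

open Matrix Real
open scoped BigOperators

noncomputable section

/-- Euclidean norm on `Fin n → ℝ`. -/
def enorm' {n : ℕ} (v : Fin n → ℝ) : ℝ := Real.sqrt (∑ i, v i ^ 2)

/-- The `k×d` matrix whose `j`-th row is `e j`. -/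
def rowMat {d k : ℕ} (e : Fin k → Fin d → ℝ) : Matrix (Fin k) (Fin d) ℝ :=
  Matrix.of fun j i => e j i

/-- The graph norm `|x|_Γ = sqrt (xᵀ (EᵀE)⁻¹ x)`. -/
def gNorm {d k : ℕ} (e : Fin k → Fin d → ℝ) (x : Fin d → ℝ) : ℝ :=
  Real.sqrt (x ⬝ᵥ (((rowMat e)ᵀ * rowMat e)⁻¹ *ᵥ x))

/-- The Carleman weight profile. -/
def phiFun (c t : ℝ) : ℝ :=
  -Real.log t + c * (Real.log t * Real.arctan (Real.log t)
    - (1/2) * Real.log (1 + Real.log t ^ 2))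

/-- The Carleman weight `φ_τ(x) = τ φ(|x|_Γ)`. -/
def phiTau {d k : ℕ} (e : Fin k → Fin d → ℝ) (c τ : ℝ) (x : Fin d → ℝ) : ℝ :=
  τ * phiFun c (gNorm e x)

/-- Gradient of a function on `ℝ^d` (vector of partial derivatives). -/
def grad' {d : ℕ} (ψ : (Fin d → ℝ) → ℝ) (x : Fin d → ℝ) : Fin d → ℝ :=
  fun i => fderiv ℝ ψ x (Pi.single i 1)

/-- Hessian matrix of a function on `ℝ^d`. -/
def hess' {d : ℕ} (ψ : (Fin d → ℝ) → ℝ) (x : Fin d → ℝ) : Matrix (Fin d) (Fin d) ℝ :=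
  Matrix.of fun i j => fderiv ℝ (fun y => fderiv ℝ ψ y (Pi.single j 1)) x (Pi.single i 1)

namespace CarlemanWeight

section Calculus

variable {n : ℕ}

def dotCLM (u : Fin n → ℝ) : (Fin n → ℝ) →L[ℝ] ℝ :=
  LinearMap.toContinuousLinearMap (dotProductBilin ℝ ℝ u)

@[simp] lemma dotCLM_apply (u v : Fin n → ℝ) : dotCLM u v = u ⬝ᵥ v := rfl

lemma grad'_eq_of_hasFDerivAt {ψ : (Fin n → ℝ) → ℝ} {x g : Fin n → ℝ}
    (h : HasFDerivAt ψ (dotCLM g) x) : grad' ψ x = g := by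
  ext i
  simp [grad', h.fderiv]

variable {A : Matrix (Fin n) (Fin n) ℝ}

lemma hasFDerivAt_dotProduct_mulVec_self (hA : Aᵀ = A) (x : Fin n → ℝ) :
    HasFDerivAt (fun y => y ⬝ᵥ (A *ᵥ y)) (dotCLM ((2 : ℝ) • (A *ᵥ x))) x := by
  have hterm (i : Fin n) : HasFDerivAt (fun y : Fin n → ℝ => y i * (A i ⬝ᵥ y))
      (x i • dotCLM (A i) + (A i ⬝ᵥ x) • ContinuousLinearMap.proj i) x :=
    (hasFDerivAt_apply i x).mul (dotCLM (A i)).hasFDerivAt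
  have hQ : (fun y => y ⬝ᵥ (A *ᵥ y)) = fun y => ∑ i, y i * (A i ⬝ᵥ y) := by
    funext y
    simp only [dotProduct, mulVec]
  rw [hQ]
  refine (HasFDerivAt.fun_sum fun i _ => hterm i).congr_fderiv ?_
  ext v
  have hsymm : x ⬝ᵥ (A *ᵥ v) = (A *ᵥ x) ⬝ᵥ v := by
    rw [dotProduct_mulVec, ← mulVec_transpose, hA]
  simp only [dotCLM_apply, _root_.sum_apply, _root_.add_apply,
    _root_.smul_apply, ContinuousLinearMap.proj_apply, smul_eq_mul,
    Finset.sum_add_distrib, smul_dotProduct]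
  change x ⬝ᵥ (A *ᵥ v) + (A *ᵥ x) ⬝ᵥ v = _
  rw [hsymm]
  ring

lemma hasFDerivAt_comp_sqrt_dotProduct_mulVec_self (hA : Aᵀ = A) {f : ℝ → ℝ} {f' : ℝ}
    {x : Fin n → ℝ} (hx : 0 < x ⬝ᵥ (A *ᵥ x)) (hf : HasDerivAt f f' √(x ⬝ᵥ (A *ᵥ x))) :
    HasFDerivAt (fun y => f √(y ⬝ᵥ (A *ᵥ y)))
      (dotCLM ((f' / √(x ⬝ᵥ (A *ᵥ x))) • (A *ᵥ x))) x := by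
  have h := hf.comp_hasFDerivAt x
    ((Real.hasDerivAt_sqrt hx.ne').comp_hasFDerivAt x (hasFDerivAt_dotProduct_mulVec_self hA x))
  refine h.congr_fderiv ?_
  ext v
  have : √(x ⬝ᵥ (A *ᵥ x)) ≠ 0 := (Real.sqrt_pos.2 hx).ne'
  simp only [_root_.smul_apply, dotCLM_apply, smul_dotProduct, smul_eq_mul]
  field_simp

lemma hess'_comp_sqrt_dotProduct_mulVec_self (hA : Aᵀ = A) {f f' : ℝ → ℝ} {f'' : ℝ}
    {x : Fin n → ℝ} (hx : 0 < x ⬝ᵥ (A *ᵥ x)) (hf : ∀ t, 0 < t → HasDerivAt f (f' t) t)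
    (hf' : HasDerivAt f' f'' √(x ⬝ᵥ (A *ᵥ x))) :
    hess' (fun y => f √(y ⬝ᵥ (A *ᵥ y))) x =
      (f' √(x ⬝ᵥ (A *ᵥ x)) / √(x ⬝ᵥ (A *ᵥ x))) • A +
      ((f'' * √(x ⬝ᵥ (A *ᵥ x)) - f' √(x ⬝ᵥ (A *ᵥ x))) / √(x ⬝ᵥ (A *ᵥ x)) ^ 3) •
        vecMulVec (A *ᵥ x) (A *ᵥ x) := by
  set ρ := √(x ⬝ᵥ (A *ᵥ x)) with hρ
  have hρ0 : 0 < ρ := Real.sqrt_pos.2 hx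
  have hpartial (j : Fin n) : (fun y => fderiv ℝ (fun y => f √(y ⬝ᵥ (A *ᵥ y))) y (Pi.single j 1))
      =ᶠ[nhds x] fun y => f' √(y ⬝ᵥ (A *ᵥ y)) / √(y ⬝ᵥ (A *ᵥ y)) * (A j ⬝ᵥ y) := by
    have hopen : IsOpen {y : Fin n → ℝ | 0 < y ⬝ᵥ (A *ᵥ y)} :=
      isOpen_lt continuous_const (by simp only [dotProduct, mulVec]; fun_prop)
    filter_upwards [hopen.mem_nhds hx] with y hy
    rw [(hasFDerivAt_comp_sqrt_dotProduct_mulVec_self hA hy (hf _ (Real.sqrt_pos.2 hy))).fderiv]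
    simp [dotProduct, Pi.single_apply, mulVec]
  have hquot : HasDerivAt (fun t => f' t / t) ((f'' * ρ - f' ρ) / ρ ^ 2) ρ := by
    simpa using hf'.fun_div (hasDerivAt_id' ρ) hρ0.ne'
  ext i j
  have hj : HasFDerivAt (fun y => f' √(y ⬝ᵥ (A *ᵥ y)) / √(y ⬝ᵥ (A *ᵥ y)) * (A j ⬝ᵥ y)) _ x :=
    (hasFDerivAt_comp_sqrt_dotProduct_mulVec_self hA hx hquot).mul (dotCLM (A j)).hasFDerivAt
  rw [hess', of_apply, (hpartial j).fderiv_eq, hj.fderiv]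
  have hsymm : A j i = A i j := by rw [← transpose_apply A i j, hA]
  simp only [_root_.add_apply, _root_.smul_apply, dotCLM_apply, dotProduct_single_one,
    smul_eq_mul, Matrix.add_apply, Matrix.smul_apply, vecMulVec_apply, Pi.smul_apply, ← hρ, hsymm]
  change _ + (A *ᵥ x) j * _ = _
  field_simp

end Calculus

section Profile

variable {c t : ℝ}

def phiDeriv (c t : ℝ) : ℝ := (-1 + c * arctan (log t)) / t

def phiDeriv2 (c t : ℝ) : ℝ := (c / (1 + log t ^ 2) + 1 - c * arctan (log t)) / t ^ 2

lemma hasDerivAt_phiFun (ht : t ≠ 0) : HasDerivAt (phiFun c) (phiDeriv c t) t := by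
  have hlog := hasDerivAt_log ht
  have h1 : (0 : ℝ) < 1 + log t ^ 2 := by positivity
  have hlog1 := (((hlog.pow 2).const_add 1).log h1.ne').const_mul (1 / 2)
  have h := hlog.neg.add (((hlog.mul hlog.arctan).sub hlog1).const_mul c)
  refine h.congr_deriv ?_
  rw [phiDeriv]
  simp only [Pi.pow_apply]
  field_simp
  ring

lemma hasDerivAt_phiDeriv (ht : t ≠ 0) : HasDerivAt (phiDeriv c) (phiDeriv2 c t) t := by
  have h := ((((hasDerivAt_log ht).arctan).const_mul c).const_add (-1)).div
    (hasDerivAt_id' t) ht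
  refine h.congr_deriv ?_
  have h1 : (0 : ℝ) < 1 + log t ^ 2 := by positivity
  rw [phiDeriv2]
  field_simp
  ring

lemma phiDeriv2_add_phiDeriv_div (ht : t ≠ 0) :
    phiDeriv2 c t + phiDeriv c t / t = c / ((1 + log t ^ 2) * t ^ 2) := by
  rw [phiDeriv2, phiDeriv]
  field_simp
  ring

lemma neg_one_le_phiDeriv (hc : 0 ≤ c) (ht : 1 ≤ t) : -1 ≤ phiDeriv c t := by
  have hat : 0 ≤ c * arctan (log t) := mul_nonneg hc (arctan_nonneg.2 (log_nonneg ht))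
  rw [phiDeriv, le_div_iff₀ (by linarith)]
  linarith

lemma phiDeriv_le (hc : 0 ≤ c) (hcπ : c ≤ 2 / π) (ht : 0 < t) (ht4 : t ≤ 4) :
    phiDeriv c t ≤ -((1 - c * (π / 2)) / 4) := by
  have hat : c * arctan (log t) ≤ c * (π / 2) :=
    mul_le_mul_of_nonneg_left (arctan_lt_pi_div_two _).le hc
  have hcπ' : c * (π / 2) ≤ 1 := by
    rw [le_div_iff₀ pi_pos] at hcπ
    linarith
  rw [phiDeriv, ← neg_div, div_le_div_iff₀ ht (by norm_num)]
  nlinarith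

lemma le_phiDeriv2_add_phiDeriv_div (hc : 0 ≤ c) (ht : 1 ≤ t) (ht4 : t ≤ 4) :
    c / 160 ≤ phiDeriv2 c t + phiDeriv c t / t := by
  have hlog : log t ≤ 3 := by linarith [log_le_sub_one_of_pos (x := t) (by linarith)]
  have hlog0 : 0 ≤ log t := log_nonneg ht
  rw [phiDeriv2_add_phiDeriv_div (by positivity)]
  gcongr
  calc (1 + log t ^ 2) * t ^ 2 ≤ (1 + 3 ^ 2) * 4 ^ 2 := by gcongr
    _ = 160 := by norm_num

end Profile

section Euclidean

variable {n : ℕ}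

lemma enorm'_eq_norm (v : Fin n → ℝ) : enorm' v = ‖WithLp.toLp 2 v‖ := by
  simp [enorm', EuclideanSpace.norm_eq]

lemma sq_enorm' (v : Fin n → ℝ) : enorm' v ^ 2 = v ⬝ᵥ v := by
  rw [enorm'_eq_norm, ← real_inner_self_eq_norm_sq, EuclideanSpace.inner_toLp_toLp]
  simp

lemma abs_dotProduct_le (v w : Fin n → ℝ) : |v ⬝ᵥ w| ≤ enorm' v * enorm' w := by
  rw [enorm'_eq_norm, enorm'_eq_norm, dotProduct_comm]
  simpa [EuclideanSpace.inner_toLp_toLp] using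
    abs_real_inner_le_norm (WithLp.toLp 2 v) (WithLp.toLp 2 w)

lemma le_mul_dotProduct_add_self {s τ δ : ℝ} {z η : Fin n → ℝ} (hs : |s| ≤ τ)
    (hz : enorm' z ≤ τ) (hη : enorm' η ≤ δ) (hδ : δ ≤ τ) :
    s * (z ⬝ᵥ z) - 3 * τ ^ 2 * δ ≤ s * ((z + η) ⬝ᵥ (z + η)) := by
  have hη0 : 0 ≤ enorm' η := Real.sqrt_nonneg _
  have hcross : |2 * (z ⬝ᵥ η) + η ⬝ᵥ η| ≤ 3 * τ * δ := by
    have h1 := abs_dotProduct_le z η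
    have h2 : η ⬝ᵥ η ≤ δ * τ := by
      rw [← sq_enorm']; nlinarith
    have h3 : 0 ≤ η ⬝ᵥ η := by rw [← sq_enorm']; positivity
    rw [abs_le] at h1 ⊢
    constructor <;> nlinarith
  have hexpand : (z + η) ⬝ᵥ (z + η) = z ⬝ᵥ z + (2 * (z ⬝ᵥ η) + η ⬝ᵥ η) := by
    simp only [add_dotProduct, dotProduct_add, dotProduct_comm η z]
    ring
  have hprod : |s * (2 * (z ⬝ᵥ η) + η ⬝ᵥ η)| ≤ τ * (3 * τ * δ) := by
    rw [abs_mul]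
    exact mul_le_mul hs hcross (abs_nonneg _) ((abs_nonneg s).trans hs)
  rw [hexpand, mul_add]
  linarith [neg_abs_le (s * (2 * (z ⬝ᵥ η) + η ⬝ᵥ η))]

end Euclidean

section Gram

lemma mulVec_injective_of_span_rows_eq_top {R m n : Type*} [CommRing R] [Fintype n]
    (M : Matrix m n R) (h : Submodule.span R (Set.range M) = ⊤) : Function.Injective M.mulVec := by
  refine (injective_iff_map_eq_zero M.mulVecLin).2 fun y hy => ?_
  have hrows : Set.range M ⊆ LinearMap.ker ((dotProductBilin R R).flip y) := by
    rintro _ ⟨j, rfl⟩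
    exact congrFun hy j
  have hall : ∀ w, w ⬝ᵥ y = 0 := fun w => (h ▸ Submodule.span_le.2 hrows) Submodule.mem_top
  exact dotProduct_eq_zero y fun w => (dotProduct_comm y w).trans (hall w)

variable {k d : ℕ}

lemma mulVec_dotProduct_mulVec (E : Matrix (Fin k) (Fin d) ℝ) (p q : Fin d → ℝ) :
    (E *ᵥ p) ⬝ᵥ (E *ᵥ q) = p ⬝ᵥ ((Eᵀ * E) *ᵥ q) := by
  rw [← mulVec_mulVec, dotProduct_mulVec p, vecMul_transpose]

lemma dotProduct_conj_mulVec_add_vecMulVec (E : Matrix (Fin k) (Fin d) ℝ)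
    (hE : IsUnit (Eᵀ * E).det) (s t : ℝ) (x ξ : Fin d → ℝ) :
    (E *ᵥ ξ) ⬝ᵥ ((E * (s • (Eᵀ * E)⁻¹ + t • vecMulVec ((Eᵀ * E)⁻¹ *ᵥ x) ((Eᵀ * E)⁻¹ *ᵥ x))
        * Eᵀ) *ᵥ (E *ᵥ ξ)) =
      s * ((E *ᵥ ξ) ⬝ᵥ (E *ᵥ ξ)) + t * ((E *ᵥ ((Eᵀ * E)⁻¹ *ᵥ x)) ⬝ᵥ (E *ᵥ ξ)) ^ 2 := by
  set u := (Eᵀ * E)⁻¹ *ᵥ x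
  set H := s • (Eᵀ * E)⁻¹ + t • vecMulVec u u
  have hH : H *ᵥ ((Eᵀ * E) *ᵥ ξ) = s • ξ + (t * ((E *ᵥ u) ⬝ᵥ (E *ᵥ ξ))) • u := by
    rw [add_mulVec, smul_mulVec, smul_mulVec, mulVec_mulVec, nonsing_inv_mul _ hE,
      one_mulVec, vecMulVec_mulVec, mulVec_dotProduct_mulVec]
    simp [smul_smul]
  calc (E *ᵥ ξ) ⬝ᵥ ((E * H * Eᵀ) *ᵥ (E *ᵥ ξ))
      = (E *ᵥ ξ) ⬝ᵥ (E *ᵥ (H *ᵥ ((Eᵀ * E) *ᵥ ξ))) := by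
        simp only [mulVec_mulVec, Matrix.mul_assoc]
    _ = _ := by
      rw [mulVec_dotProduct_mulVec, hH, mulVec_add, mulVec_smul, mulVec_smul, dotProduct_add,
        dotProduct_smul, dotProduct_smul, ← mulVec_dotProduct_mulVec, ← mulVec_dotProduct_mulVec,
        dotProduct_comm (E *ᵥ ξ) (E *ᵥ u), smul_eq_mul, smul_eq_mul]
      ring

end Gram

section Weight

variable {d k : ℕ} (e : Fin k → Fin d → ℝ) {c τ : ℝ} {x : Fin d → ℝ}

def gramInv : Matrix (Fin d) (Fin d) ℝ := ((rowMat e)ᵀ * rowMat e)⁻¹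

lemma gramInv_transpose : (gramInv e)ᵀ = gramInv e := by
  rw [gramInv, transpose_nonsing_inv, transpose_mul, transpose_transpose]

lemma isUnit_det_gram (hspan : Submodule.span ℝ (Set.range e) = ⊤) :
    IsUnit ((rowMat e)ᵀ * rowMat e).det := by
  have h := PosDef.conjTranspose_mul_self (rowMat e)
    (mulVec_injective_of_span_rows_eq_top (rowMat e) hspan)
  rw [conjTranspose_eq_transpose_of_trivial] at h
  exact isUnit_iff_ne_zero.2 h.det_pos.ne'

lemma grad'_phiTau (hx : 0 < gNorm e x) :
    grad' (phiTau e c τ) x = (τ * phiDeriv c (gNorm e x) / gNorm e x) • (gramInv e *ᵥ x) :=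
  grad'_eq_of_hasFDerivAt <| hasFDerivAt_comp_sqrt_dotProduct_mulVec_self (gramInv_transpose e)
    (Real.sqrt_pos.1 hx) ((hasDerivAt_phiFun hx.ne').const_mul τ)

lemma hess'_phiTau (hx : 0 < gNorm e x) :
    hess' (phiTau e c τ) x =
      (τ * phiDeriv c (gNorm e x) / gNorm e x) • gramInv e +
      (τ * (phiDeriv2 c (gNorm e x) * gNorm e x - phiDeriv c (gNorm e x)) / gNorm e x ^ 3) •
        vecMulVec (gramInv e *ᵥ x) (gramInv e *ᵥ x) := by
  have h := hess'_comp_sqrt_dotProduct_mulVec_self (f := fun t => τ * phiFun c t)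
    (gramInv_transpose e) (Real.sqrt_pos.1 hx) (fun t ht => (hasDerivAt_phiFun ht.ne').const_mul τ)
    ((hasDerivAt_phiDeriv hx.ne').const_mul τ)
  rw [show gNorm e x = √(x ⬝ᵥ (gramInv e *ᵥ x)) from rfl] at h ⊢
  refine h.trans ?_
  congr 2
  ring

lemma hessForm_phiTau (hspan : Submodule.span ℝ (Set.range e) = ⊤) (hx : 0 < gNorm e x)
    (ξ : Fin d → ℝ) :
    (rowMat e *ᵥ ξ) ⬝ᵥ ((rowMat e * hess' (phiTau e c τ) x * (rowMat e)ᵀ) *ᵥ (rowMat e *ᵥ ξ)) =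
      τ * phiDeriv c (gNorm e x) / gNorm e x * ((rowMat e *ᵥ ξ) ⬝ᵥ (rowMat e *ᵥ ξ)) +
      τ * (phiDeriv2 c (gNorm e x) * gNorm e x - phiDeriv c (gNorm e x)) / gNorm e x ^ 3 *
        ((rowMat e *ᵥ (gramInv e *ᵥ x)) ⬝ᵥ (rowMat e *ᵥ ξ)) ^ 2 := by
  rw [hess'_phiTau e hx]
  exact dotProduct_conj_mulVec_add_vecMulVec _ (isUnit_det_gram e hspan) _ _ x ξ

lemma dotProduct_self_rowMat_mulVec_gramInv (hspan : Submodule.span ℝ (Set.range e) = ⊤)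
    (hx : 0 < gNorm e x) :
    (rowMat e *ᵥ (gramInv e *ᵥ x)) ⬝ᵥ (rowMat e *ᵥ (gramInv e *ᵥ x)) = gNorm e x ^ 2 := by
  rw [mulVec_dotProduct_mulVec, mulVec_mulVec, gramInv,
    mul_nonsing_inv _ (isUnit_det_gram e hspan), one_mulVec, dotProduct_comm, gNorm,
    Real.sq_sqrt (Real.sqrt_pos.1 hx).le]

lemma cube_mul_le_hessForm_grad_add_hessForm (hspan : Submodule.span ℝ (Set.range e) = ⊤)
    (hτ : 0 < τ) (hx : 1 ≤ gNorm e x) (ha : -1 ≤ phiDeriv c (gNorm e x))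
    (ha0 : phiDeriv c (gNorm e x) ≤ 0)
    (hb : 0 ≤ phiDeriv2 c (gNorm e x) + phiDeriv c (gNorm e x) / gNorm e x)
    {γ : ℝ} (hγ : γ ≤ 1) {ξ ζ : Fin d → ℝ}
    (hζ : enorm' (rowMat e *ᵥ ζ) = enorm' (rowMat e *ᵥ grad' (phiTau e c τ) x))
    (hξζ : enorm' (rowMat e *ᵥ ξ - rowMat e *ᵥ ζ) ≤ γ * τ) :
    τ ^ 3 * (phiDeriv c (gNorm e x) ^ 2 *
        (phiDeriv2 c (gNorm e x) + phiDeriv c (gNorm e x) / gNorm e x) - 3 * γ) ≤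
      (rowMat e *ᵥ grad' (phiTau e c τ) x) ⬝ᵥ
          ((rowMat e * hess' (phiTau e c τ) x * (rowMat e)ᵀ) *ᵥ
            (rowMat e *ᵥ grad' (phiTau e c τ) x)) +
        (rowMat e *ᵥ ξ) ⬝ᵥ
          ((rowMat e * hess' (phiTau e c τ) x * (rowMat e)ᵀ) *ᵥ (rowMat e *ᵥ ξ)) := by
  have hx0 : 0 < gNorm e x := by linarith
  rw [hessForm_phiTau e hspan hx0, hessForm_phiTau e hspan hx0, grad'_phiTau e hx0, mulVec_smul]
  set ρ := gNorm e x
  set a := phiDeriv c ρ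
  set b := phiDeriv2 c ρ
  set r := rowMat e *ᵥ (gramInv e *ᵥ x)
  set s := τ * a / ρ
  set t := τ * (b * ρ - a) / ρ ^ 3
  have hr : r ⬝ᵥ r = ρ ^ 2 := dotProduct_self_rowMat_mulVec_gramInv e hspan hx0
  have hs : |s| ≤ τ := by
    rw [abs_div, abs_mul, abs_of_pos hτ, abs_of_pos hx0, div_le_iff₀ hx0]
    nlinarith [abs_le.2 ⟨ha, ha0.trans zero_le_one⟩]
  have ht : 0 ≤ t := by
    have hbρ : b * ρ - a = ρ * (b + a / ρ) - 2 * a := by field_simp; ring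
    have : 0 ≤ b * ρ - a := by rw [hbρ]; nlinarith
    positivity
  have hζζ : (rowMat e *ᵥ ζ) ⬝ᵥ (rowMat e *ᵥ ζ) = s ^ 2 * ρ ^ 2 := by
    rw [← sq_enorm', hζ, grad'_phiTau e hx0, mulVec_smul, sq_enorm', smul_dotProduct,
      dotProduct_smul, hr, smul_eq_mul, smul_eq_mul]
    ring
  have hζτ : enorm' (rowMat e *ᵥ ζ) ≤ τ := by
    have hsq : enorm' (rowMat e *ᵥ ζ) ^ 2 ≤ τ ^ 2 := by
      have ha2 : a ^ 2 ≤ 1 := by nlinarith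
      rw [sq_enorm', hζζ, ← mul_pow, show s * ρ = τ * a by simp only [s]; field_simp, mul_pow]
      exact mul_le_of_le_one_right (sq_nonneg τ) ha2
    exact (pow_le_pow_iff_left₀ (Real.sqrt_nonneg _) hτ.le two_ne_zero).1 hsq
  have hpert := le_mul_dotProduct_add_self hs hζτ hξζ (by nlinarith)
  rw [add_sub_cancel, hζζ] at hpert
  have hmain :
      2 * (s * (s ^ 2 * ρ ^ 2)) + t * (s * ρ ^ 2) ^ 2 = τ ^ 3 * (a ^ 2 * (b + a / ρ)) := by
    simp only [s, t]
    field_simp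
    ring
  simp only [smul_dotProduct, dotProduct_smul, hr, smul_eq_mul]
  nlinarith [mul_nonneg ht (sq_nonneg (r ⬝ᵥ (rowMat e *ᵥ ξ)))]

end Weight

end CarlemanWeight

open CarlemanWeight

theorem stmt1_general (d k : ℕ)
    (e : Fin k → Fin d → ℝ) (hspan : Submodule.span ℝ (Set.range e) = ⊤)
    (c : ℝ) (hc0 : 0 < c) (hc1 : c < 2 / Real.pi) :
    ∃ γ₀ > (0 : ℝ), ∃ C > (0 : ℝ), ∀ τ > (0 : ℝ), ∀ x : Fin d → ℝ,
      1 ≤ gNorm e x → gNorm e x ≤ 4 →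
      ∀ ξ : Fin d → ℝ,
        (∃ ζ : Fin d → ℝ,
            enorm' (rowMat e *ᵥ ζ) = enorm' (rowMat e *ᵥ grad' (phiTau e c τ) x) ∧
            (rowMat e *ᵥ ζ) ⬝ᵥ (rowMat e *ᵥ grad' (phiTau e c τ) x) = 0 ∧
            enorm' (rowMat e *ᵥ ξ - rowMat e *ᵥ ζ) ≤ γ₀ * τ) →
        (rowMat e *ᵥ grad' (phiTau e c τ) x) ⬝ᵥ
            ((rowMat e * hess' (phiTau e c τ) x * (rowMat e)ᵀ) *ᵥ
              (rowMat e *ᵥ grad' (phiTau e c τ) x))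
          + (rowMat e *ᵥ ξ) ⬝ᵥ
            ((rowMat e * hess' (phiTau e c τ) x * (rowMat e)ᵀ) *ᵥ (rowMat e *ᵥ ξ))
          ≥ C * τ ^ 3 := by
  set a₀ := (1 - c * (π / 2)) / 4
  have ha₀ : 0 < a₀ := by
    rw [lt_div_iff₀ pi_pos] at hc1
    simp only [a₀]
    linarith
  set m := a₀ ^ 2 * (c / 160)
  have hm : 0 < m := by positivity
  refine ⟨min 1 (m / 6), by positivity, m / 2, by positivity,
    fun τ hτ x hx1 hx4 ξ ⟨ζ, hζ, _, hξζ⟩ => ?_⟩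
  have ha : phiDeriv c (gNorm e x) ≤ -a₀ := phiDeriv_le hc0.le hc1.le (by linarith) hx4
  have hb := le_phiDeriv2_add_phiDeriv_div hc0.le hx1 hx4
  have hmain : m ≤ phiDeriv c (gNorm e x) ^ 2 *
      (phiDeriv2 c (gNorm e x) + phiDeriv c (gNorm e x) / gNorm e x) :=
    mul_le_mul (by nlinarith) hb (by positivity) (sq_nonneg _)
  have hγ : 3 * min 1 (m / 6) ≤ m / 2 := by linarith [min_le_right 1 (m / 6)]
  refine le_trans ?_ (cube_mul_le_hessForm_grad_add_hessForm e hspan hτ hx1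
    (neg_one_le_phiDeriv hc0.le hx1) (ha.trans (by linarith)) (hb.trans' (by positivity))
    (min_le_left _ _) hζ hξζ)
  nlinarith [pow_pos hτ 3]

/-- Lemma 3.1: lower bound for the weight on a conic neighbourhood of the
joint characteristic set. -/
theorem stmt1 (d k : ℕ) (hd : 1 ≤ d) (hdk : d ≤ k)
    (e : Fin k → Fin d → ℝ) (hspan : Submodule.span ℝ (Set.range e) = ⊤)
    (c : ℝ) (hc0 : 0 < c) (hc1 : c < 2 / Real.pi) :
    ∃ γ₀ > (0 : ℝ), ∃ C > (0 : ℝ), ∀ τ > (0 : ℝ), ∀ x : Fin d → ℝ,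
      1 ≤ gNorm e x → gNorm e x ≤ 4 →
      ∀ ξ : Fin d → ℝ,
        (∃ ζ : Fin d → ℝ,
            enorm' (rowMat e *ᵥ ζ) = enorm' (rowMat e *ᵥ grad' (phiTau e c τ) x) ∧
            (rowMat e *ᵥ ζ) ⬝ᵥ (rowMat e *ᵥ grad' (phiTau e c τ) x) = 0 ∧
            enorm' (rowMat e *ᵥ ξ - rowMat e *ᵥ ζ) ≤ γ₀ * τ) →
        (rowMat e *ᵥ grad' (phiTau e c τ) x) ⬝ᵥ
            ((rowMat e * hess' (phiTau e c τ) x * (rowMat e)ᵀ) *ᵥ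
              (rowMat e *ᵥ grad' (phiTau e c τ) x))
          + (rowMat e *ᵥ ξ) ⬝ᵥ
            ((rowMat e * hess' (phiTau e c τ) x * (rowMat e)ᵀ) *ᵥ (rowMat e *ᵥ ξ))
          ≥ C * τ ^ 3 :=
  stmt1_general d k e hspan c hc0 hc1
end
end

section
/- For every c ∈ (0, 2/π) and every t ∈ [1,4], the function φ(t) := −log t + c(log t · arctan(log t) − (1/2)log(1+(log t)²)) satisfies (φ''(t) + φ'(t)/t)·φ'(t)² = c(1 − c·arctan(log t))² / (t⁴(1 + (log t)²)), and this quantity is at least c(1 − cπ/2)² / (256(1 + 4(log 2)²)). -/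
open Real

noncomputable section

/-! Writing `φ(t) = −log t + c·G(log t)` with `G(u) = u·arctan u − ½ log(1+u²)`, so that
`G' = arctan`, gives `φ'(t) = (c·arctan(log t) − 1)/t` and then `φ'' + φ'/t = c/(t²(1+log²t))`;
multiplying by `φ'²` yields the identity. For the bound, `c ≤ 2/π` and `0 ≤ arctan(log t) < π/2`
give `0 ≤ 1 − cπ/2 ≤ 1 − c·arctan(log t)`, while on `[1,4]` the denominator is at most its
value `4⁴(1 + (2 log 2)²)` at `t = 4`. -/

lemma hasDerivAt_mul_arctan_sub_half_log (u : ℝ) :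
    HasDerivAt (fun u => u * arctan u - 1 / 2 * log (1 + u ^ 2)) (arctan u) u := by
  have hsq : HasDerivAt (fun u : ℝ => 1 + u ^ 2) (2 * u) u := by
    simpa using ((hasDerivAt_id' u).pow 2).const_add 1
  refine (((hasDerivAt_id' u).mul (hasDerivAt_id' u).arctan).sub
    ((hsq.log (by positivity)).const_mul (1 / 2))).congr_deriv ?_
  field_simp
  ring

lemma hasDerivAt_phiFun (c : ℝ) {x : ℝ} (hx : 0 < x) :
    HasDerivAt (phiFun c) ((c * arctan (log x) - 1) / x) x := by
  have hlog := hasDerivAt_log hx.ne'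
  refine (hlog.neg.add
    (((hasDerivAt_mul_arctan_sub_half_log (log x)).comp x hlog).const_mul c)).congr_deriv ?_
  field_simp
  ring

lemma deriv_phiFun (c : ℝ) {x : ℝ} (hx : 0 < x) :
    deriv (phiFun c) x = (c * arctan (log x) - 1) / x :=
  (hasDerivAt_phiFun c hx).deriv

lemma deriv_deriv_phiFun (c : ℝ) {x : ℝ} (hx : 0 < x) :
    deriv (deriv (phiFun c)) x = (c / (1 + log x ^ 2) - c * arctan (log x) + 1) / x ^ 2 := by
  have hφ' : deriv (phiFun c) =ᶠ[nhds x] fun y => (c * arctan (log y) - 1) / y := by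
    filter_upwards [Ioi_mem_nhds hx] with y hy using deriv_phiFun c hy
  have hquot := ((((hasDerivAt_log hx.ne').arctan).const_mul c).sub_const 1).fun_div
    (hasDerivAt_id' x) hx.ne'
  rw [hφ'.deriv_eq, hquot.deriv]
  field_simp
  ring

lemma phiFun_carleman_identity (c : ℝ) {t : ℝ} (ht : 0 < t) :
    (deriv (deriv (phiFun c)) t + deriv (phiFun c) t / t) * deriv (phiFun c) t ^ 2
      = c * (1 - c * arctan (log t)) ^ 2 / (t ^ 4 * (1 + log t ^ 2)) := by
  rw [deriv_deriv_phiFun c ht, deriv_phiFun c ht]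
  field_simp
  ring

lemma carleman_weight_lower_bound {c t : ℝ} (hc0 : 0 ≤ c) (hc1 : c ≤ 2 / π)
    (ht : t ∈ Set.Icc (1 : ℝ) 4) :
    c * (1 - c * π / 2) ^ 2 / (256 * (1 + 4 * log 2 ^ 2))
      ≤ c * (1 - c * arctan (log t)) ^ 2 / (t ^ 4 * (1 + log t ^ 2)) := by
  obtain ⟨ht1, ht4⟩ := ht
  have ht0 : 0 < t := one_pos.trans_le ht1
  have hlog0 : 0 ≤ log t := log_nonneg ht1
  have hlog4 : log t ≤ 2 * log 2 := by
    calc log t ≤ log (2 ^ 2) := log_le_log ht0 (by norm_num [ht4])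
      _ = 2 * log 2 := by rw [log_pow]; norm_num
  have hcπ : 0 ≤ 1 - c * π / 2 := by
    have := (le_div_iff₀ pi_pos).mp hc1
    linarith
  have harctan : c * arctan (log t) ≤ c * π / 2 := by
    nlinarith [arctan_lt_pi_div_two (log t)]
  have hnum : c * (1 - c * π / 2) ^ 2 ≤ c * (1 - c * arctan (log t)) ^ 2 :=
    mul_le_mul_of_nonneg_left (pow_le_pow_left₀ hcπ (by linarith) 2) hc0
  have hden : t ^ 4 * (1 + log t ^ 2) ≤ 256 * (1 + 4 * log 2 ^ 2) := by
    have ht4' : t ^ 4 ≤ 4 ^ 4 := pow_le_pow_left₀ ht0.le ht4 4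
    have hlog2 : log t ^ 2 ≤ (2 * log 2) ^ 2 := pow_le_pow_left₀ hlog0 hlog4 2
    calc t ^ 4 * (1 + log t ^ 2) ≤ 4 ^ 4 * (1 + (2 * log 2) ^ 2) := by gcongr
      _ = 256 * (1 + 4 * log 2 ^ 2) := by ring
  exact div_le_div₀ (by positivity) hnum (by positivity) hden

/-- for `c ∈ (0, 2/π)` and `t ∈ [1,4]`,
`(φ''(t) + φ'(t)/t)·φ'(t)² = c(1 − c·arctan(log t))²/(t⁴(1+log²t))`, and this quantity is
at least `c(1 − cπ/2)²/(256(1+4 log²2))`. -/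
theorem stmt2 (c : ℝ) (hc0 : 0 < c) (hc1 : c < 2 / Real.pi)
    (t : ℝ) (ht : t ∈ Set.Icc (1 : ℝ) 4) :
    (deriv (deriv (phiFun c)) t + deriv (phiFun c) t / t) * deriv (phiFun c) t ^ 2
        = c * (1 - c * Real.arctan (Real.log t)) ^ 2 / (t ^ 4 * (1 + Real.log t ^ 2)) ∧
      c * (1 - c * Real.arctan (Real.log t)) ^ 2 / (t ^ 4 * (1 + Real.log t ^ 2))
        ≥ c * (1 - c * Real.pi / 2) ^ 2 / (256 * (1 + 4 * Real.log 2 ^ 2)) :=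
  ⟨phiFun_carleman_identity c (one_pos.trans_le ht.1),
    carleman_weight_lower_bound hc0.le hc1.le ht⟩
end
end

section
/- There exist κ > 0, C_HF > 0 and δ₀, h₀ ∈ (0,1) such that for all h ∈ (0,h₀), all τ ≥ 1 with hτ ≤ δ₀, every x̄ ∈ ℝ^d with 1/2 ≤ |x̄|_Γ ≤ 2, and every ξ ∈ [0, h⁻¹]^d with |ξ|_E ≥ κτ: p_s(ξ)² ≥ C_HF (|ξ|_E⁴ + τ²|ξ|_E² + τ⁴). -/
open Matrix Real
open scoped BigOperators

noncomputable section

/-- `|ξ|_E := ‖Eξ‖₂`. -/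
def eNormE {d k : ℕ} (e : Fin k → Fin d → ℝ) (ξ : Fin d → ℝ) : ℝ :=
  enorm' (rowMat e *ᵥ ξ)

/-- `ξ_j := 2π⟨ξ, e_j⟩`. -/
def xiC {d k : ℕ} (e : Fin k → Fin d → ℝ) (ξ : Fin d → ℝ) (j : Fin k) : ℝ :=
  2 * Real.pi * (ξ ⬝ᵥ e j)

/-- The symmetric symbol `p_s`. -/
def pSym {d k : ℕ} (e : Fin k → Fin d → ℝ) (c τ h : ℝ) (xbar ξ : Fin d → ℝ) : ℝ :=
  ∑ j, (2 * h⁻¹ ^ 2 * (Real.cos (h * xiC e ξ j) - 1)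
    + (grad' (phiTau e c τ) xbar ⬝ᵥ e j) ^ 2 * Real.cos (h * xiC e ξ j))

/-- The antisymmetric symbol `p_a`. -/
def pAnt {d k : ℕ} (e : Fin k → Fin d → ℝ) (c τ h : ℝ) (xbar ξ : Fin d → ℝ) : ℝ :=
  ∑ j, 2 * h⁻¹ * (grad' (phiTau e c τ) xbar ⬝ᵥ e j) * Real.sin (h * xiC e ξ j)

/-- The commutator symbol `q`. -/
def qSym {d k : ℕ} (e : Fin k → Fin d → ℝ) (c τ h : ℝ) (xbar ξ : Fin d → ℝ) : ℝ :=
  4 * τ * h⁻¹ ^ 2 * ∑ i, ∑ j, Real.sin (h * xiC e ξ i) * Real.sin (h * xiC e ξ j)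
      * (e i ⬝ᵥ (hess' (phiTau e c τ) xbar *ᵥ e j))
  + τ * ∑ i, ∑ j, (e i ⬝ᵥ (hess' (phiTau e c τ) xbar *ᵥ e j))
      * ∑ η ∈ ({-1, 1} : Finset ℤ), (η : ℝ)
          * (grad' (phiTau e c τ) xbar ⬝ᵥ (e i + (η : ℝ) • e j)) ^ 2
          * Real.cos (h * xiC e ξ i - (η : ℝ) * (h * xiC e ξ j))

/-! Each summand of `p_s` is at most `-16⟨ξ, e_j⟩² + ⟨∇φ_τ(x̄), e_j⟩²`: the box condition on `ξ`
and `∑ᵢ |e_j i| ≤ 1/4` keep `h ξ_j` in `[-π/2, π/2]`, where `1 - cos θ ≥ 2θ²/π²`. Since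
`φ ∘ |·|_Γ` is `C¹` away from the origin and the shell `1/2 ≤ |x|_Γ ≤ 2` is compact (`EᵀE` is
positive definite because the `e_j` span), `|⟨∇φ_τ(x̄), e_j⟩| ≤ M τ` uniformly. Hence
`p_s ≤ -16|ξ|_E² + k M² τ² ≤ -15|ξ|_E²` as soon as `|ξ|_E² ≥ (k M² + 1) τ²`, and squaring gives
the bound with `C_HF = 75`. -/

namespace Matrix

variable {m n : Type*} [Fintype n]

theorem mulVec_injective_of_span_range_eq_top {R : Type*} [CommRing R] (A : Matrix m n R)
    (hA : Submodule.span R (Set.range A) = ⊤) : Function.Injective A.mulVec := by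
  classical
  refine (injective_iff_map_eq_zero A.mulVecLin).2 fun x hx => ?_
  have hperp : ∀ v ∈ Submodule.span R (Set.range A), v ⬝ᵥ x = 0 := by
    intro v hv
    induction hv using Submodule.span_induction with
    | mem v hv => obtain ⟨i, rfl⟩ := hv; exact congrFun hx i
    | zero => exact zero_dotProduct x
    | add u v _ _ hu hv => rw [add_dotProduct, hu, hv, add_zero]
    | smul r v _ hv => rw [smul_dotProduct, hv, smul_zero]
  funext i
  simpa using hperp (Pi.single i 1) (hA ▸ Submodule.mem_top)

theorem contDiff_dotProduct_mulVec_self {k : WithTop ℕ∞} (Q : Matrix n n ℝ) :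
    ContDiff ℝ k fun x : n → ℝ => x ⬝ᵥ (Q *ᵥ x) :=
  ContDiff.sum fun i _ => (contDiff_apply ℝ ℝ i).mul
    (ContDiff.sum fun j _ => contDiff_const.mul (contDiff_apply ℝ ℝ j))

theorem PosDef.exists_pos_mul_sq_norm_le {Q : Matrix n n ℝ} (hQ : Q.PosDef) :
    ∃ μ > 0, ∀ x : n → ℝ, μ * ‖x‖ ^ 2 ≤ x ⬝ᵥ (Q *ᵥ x) := by
  rcases subsingleton_or_nontrivial (n → ℝ) with hsub | hnontriv
  · exact ⟨1, one_pos, fun x => by simp [Subsingleton.elim x 0]⟩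
  obtain ⟨u, hu, hmin⟩ := (isCompact_sphere (0 : n → ℝ) 1).exists_isMinOn
    (NormedSpace.sphere_nonempty.mpr zero_le_one)
    (contDiff_dotProduct_mulVec_self (k := 0) Q).continuous.continuousOn
  have hu0 : u ≠ 0 := ne_zero_of_mem_unit_sphere ⟨u, hu⟩
  refine ⟨u ⬝ᵥ (Q *ᵥ u), by simpa using hQ.dotProduct_mulVec_pos hu0, fun x => ?_⟩
  rcases eq_or_ne x 0 with rfl | hx
  · simp
  have hxn : 0 < ‖x‖ := norm_pos_iff.mpr hx
  have hsphere : ‖x‖⁻¹ • x ∈ Metric.sphere (0 : n → ℝ) 1 := by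
    simp [norm_smul, hxn.ne']
  have hscale : (‖x‖⁻¹ • x) ⬝ᵥ (Q *ᵥ (‖x‖⁻¹ • x)) = ‖x‖⁻¹ ^ 2 * (x ⬝ᵥ (Q *ᵥ x)) := by
    simp only [mulVec_smul, smul_dotProduct, dotProduct_smul, smul_eq_mul]
    ring
  have hle : u ⬝ᵥ (Q *ᵥ u) ≤ ‖x‖⁻¹ ^ 2 * (x ⬝ᵥ (Q *ᵥ x)) := hscale ▸ hmin hsphere
  rwa [inv_pow, ← div_eq_inv_mul, le_div_iff₀ (by positivity)] at hle

theorem PosDef.isBounded_setOf_dotProduct_mulVec_le {Q : Matrix n n ℝ} (hQ : Q.PosDef) (R : ℝ) :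
    Bornology.IsBounded {x : n → ℝ | x ⬝ᵥ (Q *ᵥ x) ≤ R} := by
  obtain ⟨μ, hμ, hQμ⟩ := hQ.exists_pos_mul_sq_norm_le
  refine (Metric.isBounded_closedBall (x := 0) (r := √(R / μ))).subset fun x hx => ?_
  rw [mem_closedBall_zero_iff]
  refine Real.le_sqrt_of_sq_le ?_
  rw [le_div_iff₀ hμ, mul_comm]
  exact (hQμ x).trans hx

end Matrix

theorem grad'_dotProduct {d : ℕ} (ψ : (Fin d → ℝ) → ℝ) (x v : Fin d → ℝ) :
    grad' ψ x ⬝ᵥ v = fderiv ℝ ψ x v := by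
  conv_rhs => rw [pi_eq_sum_univ' v, map_sum]
  simp only [map_smul, smul_eq_mul, dotProduct, grad', mul_comm]

theorem contDiffAt_phiFun {n : WithTop ℕ∞} (c : ℝ) {t : ℝ} (ht : 0 < t) :
    ContDiffAt ℝ n (phiFun c) t := by
  have hlog : ContDiffAt ℝ n Real.log t := Real.contDiffAt_log.mpr ht.ne'
  have harctan : ContDiffAt ℝ n (fun s => arctan (log s)) t :=
    Real.contDiff_arctan.contDiffAt.comp t hlog
  exact hlog.neg.add (contDiffAt_const.mul ((hlog.mul harctan).sub
    (contDiffAt_const.mul ((contDiffAt_const.add (hlog.pow 2)).log (by positivity)))))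

section GraphNorm

variable {d k : ℕ} {e : Fin k → Fin d → ℝ}

theorem posDef_inv_gram (hspan : Submodule.span ℝ (Set.range e) = ⊤) :
    ((rowMat e)ᵀ * rowMat e)⁻¹.PosDef := by
  rw [← conjTranspose_eq_transpose_of_trivial]
  exact (PosDef.conjTranspose_mul_self _ (mulVec_injective_of_span_range_eq_top _ hspan)).inv

theorem continuous_gNorm : Continuous (gNorm e) :=
  (contDiff_dotProduct_mulVec_self (k := 0) _).continuous.sqrt

theorem contDiffAt_gNorm {n : WithTop ℕ∞} {x : Fin d → ℝ} (hx : 0 < gNorm e x) :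
    ContDiffAt ℝ n (gNorm e) x :=
  (contDiff_dotProduct_mulVec_self _).contDiffAt.sqrt fun h => hx.ne' (by simp [gNorm, h])

theorem isCompact_gNorm_preimage_Icc (hspan : Submodule.span ℝ (Set.range e) = ⊤) (a b : ℝ) :
    IsCompact (gNorm e ⁻¹' Set.Icc a b) :=
  Metric.isCompact_of_isClosed_isBounded (isClosed_Icc.preimage continuous_gNorm)
    (((posDef_inv_gram hspan).isBounded_setOf_dotProduct_mulVec_le (b ^ 2)).subset
      fun _ hx => (Real.sqrt_le_iff.mp hx.2).2)

theorem exists_norm_fderiv_phiFun_gNorm_le (hspan : Submodule.span ℝ (Set.range e) = ⊤)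
    (c : ℝ) {a : ℝ} (ha : 0 < a) (b : ℝ) :
    ∃ M, ∀ x, gNorm e x ∈ Set.Icc a b →
      ‖fderiv ℝ (fun y => phiFun c (gNorm e y)) x‖ ≤ M := by
  have hopen : IsOpen {x | 0 < gNorm e x} := isOpen_lt continuous_const continuous_gNorm
  have hC1 : ContDiffOn ℝ 1 (fun y => phiFun c (gNorm e y)) {x | 0 < gNorm e x} :=
    fun x hx => ((contDiffAt_phiFun c hx).comp x (contDiffAt_gNorm hx)).contDiffWithinAt
  exact (isCompact_gNorm_preimage_Icc hspan a b).exists_bound_of_continuousOn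
    ((hC1.continuousOn_fderiv_of_isOpen hopen le_rfl).mono fun x hx => ha.trans_le hx.1)

end GraphNorm

section Coordinates

variable {n : ℕ}

theorem sum_abs_le_of_enorm'_lt {v : Fin n → ℝ} (hv : enorm' v < 1 / (4 * √n)) :
    ∑ i, |v i| ≤ 1 / 4 := by
  have hCS : ∑ i, |v i| ≤ √n * enorm' v := by
    rw [enorm', ← Real.sqrt_mul (Nat.cast_nonneg n)]
    refine Real.le_sqrt_of_sq_le ?_
    simpa [sq_abs] using sq_sum_le_card_mul_sum_sq (s := Finset.univ) (f := fun i => |v i|)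
  calc ∑ i, |v i| ≤ √n * (1 / (4 * √n)) :=
        hCS.trans (mul_le_mul_of_nonneg_left hv.le (Real.sqrt_nonneg n))
    _ ≤ 1 / 4 := by
        rcases (Real.sqrt_nonneg n).eq_or_lt with h0 | hpos
        · rw [← h0]; norm_num
        · rw [mul_one_div, mul_comm, ← div_div, div_self hpos.ne']

theorem norm_le_sum_abs (v : Fin n → ℝ) : ‖v‖ ≤ ∑ i, |v i| :=
  (pi_norm_le_iff_of_nonneg (Finset.sum_nonneg fun i _ => abs_nonneg (v i))).2 fun i =>
    (Real.norm_eq_abs (v i)).trans_le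
      (Finset.single_le_sum (fun j _ => abs_nonneg (v j)) (Finset.mem_univ i))

theorem abs_dotProduct_le_of_abs_le {ξ v : Fin n → ℝ} {R : ℝ} (hξ : ∀ i, |ξ i| ≤ R) :
    |ξ ⬝ᵥ v| ≤ R * ∑ i, |v i| := by
  rw [Finset.mul_sum]
  refine (Finset.abs_sum_le_sum_abs _ _).trans (Finset.sum_le_sum fun i _ => ?_)
  rw [abs_mul]
  exact mul_le_mul_of_nonneg_right (hξ i) (abs_nonneg (v i))

end Coordinates

theorem pSym_summand_le {h a g B : ℝ} (hh : 0 < h) (ha : |a| ≤ h⁻¹ / 4) (hg : g ^ 2 ≤ B) :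
    2 * h⁻¹ ^ 2 * (cos (h * (2 * π * a)) - 1) + g ^ 2 * cos (h * (2 * π * a))
      ≤ -16 * a ^ 2 + B := by
  have hθ : |h * (2 * π * a)| ≤ π := by
    rw [abs_mul, abs_mul, abs_of_pos hh, abs_of_pos two_pi_pos]
    have : h * |a| ≤ 1 / 4 := by
      calc h * |a| ≤ h * (h⁻¹ / 4) := mul_le_mul_of_nonneg_left ha hh.le
        _ = 1 / 4 := by field_simp
    nlinarith [pi_pos]
  have hfree : 2 * h⁻¹ ^ 2 * (cos (h * (2 * π * a)) - 1) ≤ -16 * a ^ 2 :=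
    calc 2 * h⁻¹ ^ 2 * (cos (h * (2 * π * a)) - 1)
        ≤ 2 * h⁻¹ ^ 2 * (-(2 / π ^ 2) * (h * (2 * π * a)) ^ 2) := by
          gcongr
          linarith [cos_le_one_sub_mul_cos_sq hθ]
      _ = -16 * a ^ 2 := by field_simp; ring
  have hweight : g ^ 2 * cos (h * (2 * π * a)) ≤ B :=
    (mul_le_of_le_one_right (sq_nonneg g) (cos_le_one _)).trans hg
  linarith

section Symbol

variable {d k : ℕ} {e : Fin k → Fin d → ℝ}

theorem eNormE_sq (ξ : Fin d → ℝ) : eNormE e ξ ^ 2 = ∑ j, (ξ ⬝ᵥ e j) ^ 2 := by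
  rw [eNormE, enorm', Real.sq_sqrt (Finset.sum_nonneg fun j _ => sq_nonneg _)]
  exact Finset.sum_congr rfl fun j _ => by rw [dotProduct_comm]; rfl

theorem sq_grad'_phiTau_dotProduct_le {c τ M : ℝ} {x v : Fin d → ℝ}
    (hM : ‖fderiv ℝ (fun y => phiFun c (gNorm e y)) x‖ ≤ M) (hv : ‖v‖ ≤ 1) :
    (grad' (phiTau e c τ) x ⬝ᵥ v) ^ 2 ≤ M ^ 2 * τ ^ 2 := by
  have hderiv : |fderiv ℝ (fun y => phiFun c (gNorm e y)) x v| ≤ M :=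
    calc |fderiv ℝ (fun y => phiFun c (gNorm e y)) x v|
        ≤ ‖fderiv ℝ (fun y => phiFun c (gNorm e y)) x‖ * ‖v‖ :=
          (Real.norm_eq_abs _).symm.trans_le (ContinuousLinearMap.le_opNorm _ _)
      _ ≤ M := (mul_le_of_le_one_right (norm_nonneg _) hv).trans hM
  have hsmul : phiTau e c τ = τ • fun y => phiFun c (gNorm e y) := rfl
  rw [grad'_dotProduct, hsmul, fderiv_const_smul_field, Pi.smul_apply, FunLike.coe_smul,
    Pi.smul_apply, smul_eq_mul, mul_pow, mul_comm (τ ^ 2)]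
  exact mul_le_mul_of_nonneg_right (sq_le_sq' (abs_le.mp hderiv).1 (abs_le.mp hderiv).2)
    (sq_nonneg τ)

theorem pSym_le {c τ h B : ℝ} {xbar ξ : Fin d → ℝ} (hh : 0 < h)
    (hξ : ∀ j, |ξ ⬝ᵥ e j| ≤ h⁻¹ / 4)
    (hgrad : ∀ j, (grad' (phiTau e c τ) xbar ⬝ᵥ e j) ^ 2 ≤ B) :
    pSym e c τ h xbar ξ ≤ -16 * eNormE e ξ ^ 2 + k * B := by
  calc pSym e c τ h xbar ξ ≤ ∑ j, (-16 * (ξ ⬝ᵥ e j) ^ 2 + B) :=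
        Finset.sum_le_sum fun j _ => pSym_summand_le hh (hξ j) (hgrad j)
    _ = -16 * eNormE e ξ ^ 2 + k * B := by
        rw [eNormE_sq, Finset.sum_add_distrib, Finset.mul_sum]
        simp

end Symbol

theorem stmt9_general (d k : ℕ)
    (e : Fin k → Fin d → ℝ) (hspan : Submodule.span ℝ (Set.range e) = ⊤)
    (hnorm : ∀ j, enorm' (e j) < 1 / (4 * Real.sqrt d))
    (c : ℝ) :
    ∃ κ > (0 : ℝ), ∃ CHF > (0 : ℝ), ∃ δ₀ ∈ Set.Ioo (0 : ℝ) 1, ∃ h₀ ∈ Set.Ioo (0 : ℝ) 1,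
      ∀ h ∈ Set.Ioo (0 : ℝ) h₀, ∀ τ : ℝ, 1 ≤ τ → h * τ ≤ δ₀ →
        ∀ xbar : Fin d → ℝ, 1/2 ≤ gNorm e xbar → gNorm e xbar ≤ 2 →
          ∀ ξ : Fin d → ℝ, (∀ i, ξ i ∈ Set.Icc (0 : ℝ) h⁻¹) →
            eNormE e ξ ≥ κ * τ →
            pSym e c τ h xbar ξ ^ 2
              ≥ CHF * (eNormE e ξ ^ 4 + τ ^ 2 * eNormE e ξ ^ 2 + τ ^ 4) := by
  obtain ⟨M, hM⟩ := exists_norm_fderiv_phiFun_gNorm_le hspan c (a := 1 / 2) (by norm_num) 2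
  have hℓ1 : ∀ j, ∑ i, |e j i| ≤ 1 / 4 := fun j => sum_abs_le_of_enorm'_lt (hnorm j)
  refine ⟨√(k * M ^ 2 + 1), by positivity, 75, by norm_num, 1 / 2, ⟨by norm_num, by norm_num⟩,
    1 / 2, ⟨by norm_num, by norm_num⟩, ?_⟩
  rintro h ⟨hh, -⟩ τ hτ - xbar hx₁ hx₂ ξ hξ hκ
  have hξe : ∀ j, |ξ ⬝ᵥ e j| ≤ h⁻¹ / 4 := fun j =>
    calc |ξ ⬝ᵥ e j| ≤ h⁻¹ * ∑ i, |e j i| :=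
          abs_dotProduct_le_of_abs_le fun i => (abs_of_nonneg (hξ i).1).trans_le (hξ i).2
      _ ≤ h⁻¹ / 4 := (mul_le_mul_of_nonneg_left (hℓ1 j) (inv_nonneg.mpr hh.le)).trans_eq
          (mul_one_div _ _)
  have hgrad : ∀ j, (grad' (phiTau e c τ) xbar ⬝ᵥ e j) ^ 2 ≤ M ^ 2 * τ ^ 2 := fun j =>
    sq_grad'_phiTau_dotProduct_le (hM xbar ⟨hx₁, hx₂⟩)
      ((norm_le_sum_abs (e j)).trans (by linarith [hℓ1 j]))
  have hp := pSym_le hh hξe hgrad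
  have hS : k * (M ^ 2 * τ ^ 2) + τ ^ 2 ≤ eNormE e ξ ^ 2 := by
    have := pow_le_pow_left₀ (mul_nonneg (Real.sqrt_nonneg _) (by linarith)) hκ 2
    rw [mul_pow, Real.sq_sqrt (by positivity)] at this
    linarith
  have hkτ : 0 ≤ k * (M ^ 2 * τ ^ 2) := by positivity
  have hτS : τ ^ 2 ≤ eNormE e ξ ^ 2 := by linarith
  have hp15 : pSym e c τ h xbar ξ ≤ -15 * eNormE e ξ ^ 2 := by linarith [sq_nonneg τ]
  rw [show eNormE e ξ ^ 4 = (eNormE e ξ ^ 2) ^ 2 by ring, show τ ^ 4 = (τ ^ 2) ^ 2 by ring]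
  nlinarith [sq_nonneg τ, sq_nonneg (eNormE e ξ)]

/-- high-frequency lower bound for the symmetric symbol:
for `|ξ|_E ≥ κτ`, `p_s(ξ)² ≥ C_HF(|ξ|_E⁴ + τ²|ξ|_E² + τ⁴)`. -/
theorem stmt9 (d k : ℕ) (hd : 1 ≤ d) (hdk : d ≤ k)
    (e : Fin k → Fin d → ℝ) (hspan : Submodule.span ℝ (Set.range e) = ⊤)
    (hnorm : ∀ j, enorm' (e j) < 1 / (4 * Real.sqrt d))
    (c : ℝ) (hc0 : 0 < c) (hc1 : c < 2 / Real.pi) :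
    ∃ κ > (0 : ℝ), ∃ CHF > (0 : ℝ), ∃ δ₀ ∈ Set.Ioo (0 : ℝ) 1, ∃ h₀ ∈ Set.Ioo (0 : ℝ) 1,
      ∀ h ∈ Set.Ioo (0 : ℝ) h₀, ∀ τ : ℝ, 1 ≤ τ → h * τ ≤ δ₀ →
        ∀ xbar : Fin d → ℝ, 1/2 ≤ gNorm e xbar → gNorm e xbar ≤ 2 →
          ∀ ξ : Fin d → ℝ, (∀ i, ξ i ∈ Set.Icc (0 : ℝ) h⁻¹) →
            eNormE e ξ ≥ κ * τ →
            pSym e c τ h xbar ξ ^ 2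
              ≥ CHF * (eNormE e ξ ^ 4 + τ ^ 2 * eNormE e ξ ^ 2 + τ ^ 4) :=
  stmt9_general d k e hspan hnorm c
end
end

section
/- Let c₁, c₂ > 0, C ≥ 1, τ₀ > 1, δ₀ ∈ (0,1) and h > 0 with τ₀ < δ₀/(2h), and set α := c₂/(c₁+c₂). Suppose A, B, M are real numbers with 0 ≤ B ≤ A ≤ M and A ≤ C(e^{c₁τ}B + e^{−c₂τ}M) for every τ ∈ (τ₀, δ₀h⁻¹). Then A ≤ D(B^α·M^{1−α} + e^{−c₂δ₀/(2h)}·M), where D := max(2C, e^{(c₁+c₂)ατ₀}). -/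
open Real

/-!
Write `P = B^α M^{1-α}` and `E = e^{-c₂ s} M` with `s = δ₀/(2h)`. When `B > 0`, the two terms
`e^{c₁τ} B` and `e^{-c₂τ} M` are both equal to `P` at the balancing parameter `t` defined by
`M = e^{(c₁+c₂)t} B`. If `t ∈ (τ₀, s)`, taking `τ = t` gives `A ≤ 2CP`. If `t ≥ s`, at `τ = s` the
second term dominates and `A ≤ 2CE`. If `t ≤ τ₀`, then `A ≤ M = e^{c₂t} P ≤ e^{c₂τ₀} P`, and
`e^{c₂τ₀} = e^{(c₁+c₂)ατ₀}`. If `B = 0`, taking `τ = s` already gives `A ≤ CE`.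
-/

theorem rpow_mul_rpow_eq_exp_mul {c₁ c₂ t B M : ℝ} (hc : c₁ + c₂ ≠ 0) (hB : 0 < B)
    (hM : M = exp ((c₁ + c₂) * t) * B) :
    B ^ (c₂ / (c₁ + c₂)) * M ^ (1 - c₂ / (c₁ + c₂)) = exp (c₁ * t) * B := by
  have hexp : (c₁ + c₂) * t * (1 - c₂ / (c₁ + c₂)) = c₁ * t := by field_simp; ring
  calc B ^ (c₂ / (c₁ + c₂)) * M ^ (1 - c₂ / (c₁ + c₂))
      = exp ((c₁ + c₂) * t * (1 - c₂ / (c₁ + c₂)))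
          * (B ^ (c₂ / (c₁ + c₂)) * B ^ (1 - c₂ / (c₁ + c₂))) := by
        rw [hM, mul_rpow (exp_pos _).le hB.le, ← exp_mul]; ring
    _ = exp (c₁ * t) * B := by rw [hexp, ← rpow_add hB, add_sub_cancel, rpow_one]

theorem le_max_mul_rpow_mul_rpow_add_exp_mul {c₁ c₂ C τ₀ s A B M : ℝ} (hc : 0 < c₁ + c₂)
    (hc₂ : 0 ≤ c₂) (hC : 0 ≤ C) (hτ₀s : τ₀ < s) (hB : 0 ≤ B) (hBA : B ≤ A) (hAM : A ≤ M)
    (hyp : ∀ τ ∈ Set.Ioc τ₀ s, A ≤ C * (exp (c₁ * τ) * B + exp (-c₂ * τ) * M)) :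
    A ≤ max (2 * C) (exp (c₂ * τ₀)) *
        (B ^ (c₂ / (c₁ + c₂)) * M ^ (1 - c₂ / (c₁ + c₂)) + exp (-c₂ * s) * M) := by
  set P := B ^ (c₂ / (c₁ + c₂)) * M ^ (1 - c₂ / (c₁ + c₂))
  set E := exp (-c₂ * s) * M
  set D := max (2 * C) (exp (c₂ * τ₀))
  have hM : 0 ≤ M := (hB.trans hBA).trans hAM
  have hP : 0 ≤ P := by positivity
  have hE : 0 ≤ E := by positivity
  have hD : 0 ≤ D := (exp_pos _).le.trans (le_max_right _ _)
  have of_le_P {x : ℝ} (hx : x ≤ D) (h : A ≤ x * P) : A ≤ D * (P + E) := by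
    nlinarith [mul_le_mul_of_nonneg_right hx hP]
  have of_le_E (h : A ≤ 2 * C * E) : A ≤ D * (P + E) := by
    nlinarith [mul_le_mul_of_nonneg_right (le_max_left (2 * C) (exp (c₂ * τ₀))) hE]
  have at_s (hs : exp (c₁ * s) * B ≤ E) : A ≤ D * (P + E) :=
    of_le_E (by nlinarith [hyp s ⟨hτ₀s, le_rfl⟩])
  rcases hB.eq_or_lt with rfl | hBpos
  · exact at_s (by simpa using hE)
  set t := log (M / B) / (c₁ + c₂)
  have hMt : M = exp ((c₁ + c₂) * t) * B := by
    rw [mul_div_cancel₀ _ hc.ne', exp_log (div_pos (hBpos.trans_le (hBA.trans hAM)) hBpos),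
      div_mul_cancel₀ _ hBpos.ne']
  have hPB : P = exp (c₁ * t) * B := rpow_mul_rpow_eq_exp_mul hc.ne' hBpos hMt
  have hPM : P = exp (-c₂ * t) * M := by
    rw [hPB, hMt, ← mul_assoc, ← exp_add]; ring_nf
  rcases le_or_gt t τ₀ with htτ₀ | hτ₀t
  · refine of_le_P (le_max_right _ _) (hAM.trans ?_)
    calc M = exp (c₂ * t) * P := by rw [hPM, ← mul_assoc, ← exp_add]; ring_nf; simp
      _ ≤ exp (c₂ * τ₀) * P := by gcongr
  rcases lt_or_ge t s with hts | hst
  · refine of_le_P (le_max_left _ _) ?_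
    have := hyp t ⟨hτ₀t, hts.le⟩
    rw [← hPB, ← hPM] at this
    linarith
  · refine at_s ?_
    calc exp (c₁ * s) * B ≤ exp (-c₂ * s + (c₁ + c₂) * t) * B := by
          gcongr; nlinarith
      _ = E := by rw [exp_add, mul_assoc, ← hMt]

theorem stmt16_general (c₁ c₂ C τ₀ δ₀ h : ℝ) (hc₁ : 0 < c₁) (hc₂ : 0 < c₂) (hC : 1 ≤ C)
    (hδ₀ : δ₀ ∈ Set.Ioo (0 : ℝ) 1) (hh : 0 < h)
    (hτδ : τ₀ < δ₀ / (2 * h))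
    (A B M : ℝ) (hB0 : 0 ≤ B) (hBA : B ≤ A) (hAM : A ≤ M)
    (hyp : ∀ τ ∈ Set.Ioo τ₀ (δ₀ / h),
      A ≤ C * (Real.exp (c₁ * τ) * B + Real.exp (-c₂ * τ) * M)) :
    A ≤ max (2 * C) (Real.exp ((c₁ + c₂) * (c₂ / (c₁ + c₂)) * τ₀)) *
        (B ^ (c₂ / (c₁ + c₂)) * M ^ (1 - c₂ / (c₁ + c₂))
          + Real.exp (-(c₂ * δ₀ / (2 * h))) * M) := by
  have hc : 0 < c₁ + c₂ := add_pos hc₁ hc₂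
  have hs : δ₀ / (2 * h) < δ₀ / h := div_lt_div_of_pos_left hδ₀.1 hh (by linarith)
  have hD : (c₁ + c₂) * (c₂ / (c₁ + c₂)) * τ₀ = c₂ * τ₀ := by field_simp
  have hE : -(c₂ * δ₀ / (2 * h)) = -c₂ * (δ₀ / (2 * h)) := by ring
  rw [hD, hE]
  exact le_max_mul_rpow_mul_rpow_add_exp_mul hc hc₂.le (by linarith) hτδ hB0 hBA hAM
    fun τ hτ ↦ hyp τ ⟨hτ.1, hτ.2.trans_lt hs⟩

/-- abstract interpolation step.  If `0 ≤ B ≤ A ≤ M` and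
`A ≤ C(e^{c₁τ}B + e^{−c₂τ}M)` for every `τ ∈ (τ₀, δ₀/h)`, with `τ₀ < δ₀/(2h)`, then, with
`α = c₂/(c₁+c₂)` and `D = max(2C, e^{(c₁+c₂)ατ₀})`,
`A ≤ D(B^α M^{1−α} + e^{−c₂δ₀/(2h)} M)`. -/
theorem stmt16 (c₁ c₂ C τ₀ δ₀ h : ℝ) (hc₁ : 0 < c₁) (hc₂ : 0 < c₂) (hC : 1 ≤ C)
    (hτ₀ : 1 < τ₀) (hδ₀ : δ₀ ∈ Set.Ioo (0 : ℝ) 1) (hh : 0 < h)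
    (hτδ : τ₀ < δ₀ / (2 * h))
    (A B M : ℝ) (hB0 : 0 ≤ B) (hBA : B ≤ A) (hAM : A ≤ M)
    (hyp : ∀ τ ∈ Set.Ioo τ₀ (δ₀ / h),
      A ≤ C * (Real.exp (c₁ * τ) * B + Real.exp (-c₂ * τ) * M)) :
    A ≤ max (2 * C) (Real.exp ((c₁ + c₂) * (c₂ / (c₁ + c₂)) * τ₀)) *
        (B ^ (c₂ / (c₁ + c₂)) * M ^ (1 - c₂ / (c₁ + c₂))
          + Real.exp (-(c₂ * δ₀ / (2 * h))) * M) :=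
  stmt16_general c₁ c₂ C τ₀ δ₀ h hc₁ hc₂ hC hδ₀ hh hτδ A B M hB0 hBA hAM hyp
end
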